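/- A face with boundary word (a b a^{-1} b^{-1} X Y) is equivalent to a face with boundary word (e f e^{-1} f^{-1} Y X) for fresh edges e, f: a handle on a face may be moved past any splitting of the remaining boundary, swapping X and Y. -/
import Mathlib


/-- An oriented edge: an edge name together with an orientation. -/
abbrev OEdge := ℕ × Bool

/-- A boundary word of a face (read cyclically). -/
abbrev CWord := List OEdge

/-- A cell complex, presented by a choice of boundary word for each face. -/
abbrev PreCell := Multiset CWord

/-- The inverse of an oriented edge. -/
def oinv (x : OEdge) : OEdge := (x.1, !x.2)

/-- The inverse of a boundary word. -/
def winv (w : CWord) : CWord := (w.map oinv).reverse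

/-- The edge `e` occurs (in some orientation) in the word `w`. -/
def occursW (e : ℕ) (w : CWord) : Prop := ∃ b, (e, b) ∈ w

/-- The edge `e` occurs in the complex `C`. -/
def occursC (e : ℕ) (C : PreCell) : Prop := ∃ w ∈ C, occursW e w

/-- The total number of occurrences of the edge `e` (in either orientation) among the
boundary words of `C`. -/
def occCount (e : ℕ) (C : PreCell) : ℕ :=
  (C.map fun w => w.countP fun p => p.1 == e).sum

/-- `(F, E, B)` is a cell complex: every (oriented) edge appears at most twice in total
among the chosen boundary words. -/
def IsCellComplex (C : PreCell) : Prop := ∀ e : ℕ, occCount e C ≤ 2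

/-- Substitution used in an elementary subdivision: replace the edge `a` by the two-letter
word `bc` (and `a⁻¹` by `c⁻¹b⁻¹`). -/
def substEdge (a b c : ℕ) (p : OEdge) : CWord :=
  if p.1 = a then (if p.2 then [(b, true), (c, true)] else [(c, false), (b, false)])
  else [p]

/-- The elementary moves on cell complexes: cyclic rotation of a boundary word, replacing a
face by its inverse, splitting a face `(XY)` into `(Xa) + (a⁻¹Y)` along a fresh edge `a`,
and subdividing an edge `a` into a word `bc` of fresh edges. -/
inductive ElemMove : PreCell → PreCell → Prop
  | rot (w₁ w₂ : CWord) (C : PreCell) :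
      ElemMove ((w₁ ++ w₂) ::ₘ C) ((w₂ ++ w₁) ::ₘ C)
  | invert (w : CWord) (C : PreCell) :
      ElemMove (w ::ₘ C) (winv w ::ₘ C)
  | split (Xw Yw : CWord) (a : ℕ) (C : PreCell)
      (haX : ¬ occursW a Xw) (haY : ¬ occursW a Yw) (haC : ¬ occursC a C) :
      ElemMove ((Xw ++ Yw) ::ₘ C)
        ((Xw ++ [(a, true)]) ::ₘ ((a, false) :: Yw) ::ₘ C)
  | subdivide (a b c : ℕ) (C : PreCell)
      (hb : ¬ occursC b C) (hc : ¬ occursC c C) (hbc : b ≠ c) :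
      ElemMove C (C.map fun w => w.flatMap (substEdge a b c))

/-- Equivalence of cell complexes: the least equivalence relation generated by the
elementary moves (elementary subdivisions and their inverses). -/
def CellEquiv : PreCell → PreCell → Prop := Relation.EqvGen ElemMove

-- helpers
lemma cequiv_trans {A B D : PreCell} (h1 : CellEquiv A B) (h2 : CellEquiv B D) : CellEquiv A D :=
  Relation.EqvGen.trans _ _ _ h1 h2

instance : Trans CellEquiv CellEquiv CellEquiv := ⟨cequiv_trans⟩

local infix:50 " ~c " => CellEquiv

@[simp] lemma occursW_nil (e : ℕ) : occursW e ([] : CWord) ↔ False := by simp [occursW]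

@[simp] lemma occursW_cons (e : ℕ) (p : OEdge) (w : CWord) :
    occursW e (p :: w) ↔ p.1 = e ∨ occursW e w := by
  obtain ⟨x, s⟩ := p
  simp only [occursW, List.mem_cons, Prod.mk.injEq]
  cases s <;> aesop

@[simp] lemma occursW_append (e : ℕ) (u v : CWord) :
    occursW e (u ++ v) ↔ occursW e u ∨ occursW e v := by
  simp [occursW, List.mem_append, exists_or]

lemma rot' {u v : CWord} (w₁ w₂ : CWord) (C : PreCell)
    (h₁ : u = w₁ ++ w₂) (h₂ : v = w₂ ++ w₁) : CellEquiv (u ::ₘ C) (v ::ₘ C) := by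
  subst h₁; subst h₂; exact Relation.EqvGen.rel _ _ (ElemMove.rot w₁ w₂ C)

lemma split' (Xw Yw : CWord) (α : ℕ) (C : PreCell)
    (hX : ¬ occursW α Xw) (hY : ¬ occursW α Yw) (hC : ¬ occursC α C)
    {u : CWord} {P : PreCell}
    (hu : u = Xw ++ Yw)
    (hP : P = (Xw ++ [(α, true)]) ::ₘ ((α, false) :: Yw) ::ₘ C) :
    CellEquiv (u ::ₘ C) P := by
  subst hu; subst hP; exact Relation.EqvGen.rel _ _ (ElemMove.split Xw Yw α C hX hY hC)

lemma merge' (Xw Yw : CWord) (α : ℕ) (C : PreCell)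
    (hX : ¬ occursW α Xw) (hY : ¬ occursW α Yw) (hC : ¬ occursC α C)
    {u : CWord} {P : PreCell}
    (hu : u = Xw ++ Yw)
    (hP : P = (Xw ++ [(α, true)]) ::ₘ ((α, false) :: Yw) ::ₘ C) :
    CellEquiv P (u ::ₘ C) :=
  Relation.EqvGen.symm _ _ (split' Xw Yw α C hX hY hC hu hP)

/-- Boundary reconnection. -/
lemma reconn (A₁ A₂ Z : CWord) (β γ : ℕ) (C : PreCell)
    (hb1 : ¬ occursW β A₁) (hb2 : ¬ occursW β A₂) (hbZ : ¬ occursW β Z) (hbC : ¬ occursC β C)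
    (hg1 : ¬ occursW γ A₁) (hg2 : ¬ occursW γ A₂) (hgZ : ¬ occursW γ Z) (hgC : ¬ occursC γ C)
    (hgb : γ ≠ β) :
    CellEquiv ((A₁ ++ A₂ ++ [(β, true)] ++ Z ++ [(β, false)]) ::ₘ C)
              ((A₂ ++ A₁ ++ [(γ, false)] ++ Z ++ [(γ, true)]) ::ₘ C) := by
  calc
    ((A₁ ++ A₂ ++ [(β, true)] ++ Z ++ [(β, false)]) ::ₘ C)
      ~c ((A₂ ++ [(β, true)] ++ Z ++ [(β, false)] ++ A₁) ::ₘ C) := by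
        apply rot' A₁ (A₂ ++ [(β, true)] ++ Z ++ [(β, false)]) C <;> simp
    _ ~c ((A₂ ++ [(β, true)] ++ [(γ, true)]) ::ₘ ((γ, false) :: (Z ++ [(β, false)] ++ A₁)) ::ₘ C) := by
        apply split' (A₂ ++ [(β, true)]) (Z ++ [(β, false)] ++ A₁) γ C
        · simp [hg2, Ne.symm hgb]
        · simp [hg1, hgZ, Ne.symm hgb]
        · exact hgC
        · simp
        · simp
    _ ~c (((γ, true) :: (A₂ ++ [(β, true)])) ::ₘ ((γ, false) :: (Z ++ [(β, false)] ++ A₁)) ::ₘ C) := by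
        apply rot' (A₂ ++ [(β, true)]) [(γ, true)] _ <;> simp
    _ ~c (((γ, true) :: (A₂ ++ [(β, true)])) ::ₘ ((β, false) :: (A₁ ++ [(γ, false)] ++ Z)) ::ₘ C) := by
        rw [Multiset.cons_swap, Multiset.cons_swap ((γ, true) :: (A₂ ++ [(β, true)]))]
        apply rot' ((γ, false) :: Z) ([(β, false)] ++ A₁) _ <;> simp
    _ ~c ((((γ, true) :: A₂) ++ (A₁ ++ [(γ, false)] ++ Z)) ::ₘ C) := by
        apply merge' ((γ, true) :: A₂) (A₁ ++ [(γ, false)] ++ Z) β C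
        · simp [hb2, hgb]
        · simp [hb1, hbZ, hgb]
        · exact hbC
        · rfl
        · simp
    _ ~c ((A₂ ++ A₁ ++ [(γ, false)] ++ Z ++ [(γ, true)]) ::ₘ C) := by
        apply rot' [(γ, true)] (A₂ ++ (A₁ ++ [(γ, false)] ++ Z)) C <;> simp

lemma reconn' (A₁ A₂ Z : CWord) (β γ : ℕ) (C : PreCell)
    (hb1 : ¬ occursW β A₁) (hb2 : ¬ occursW β A₂) (hbZ : ¬ occursW β Z) (hbC : ¬ occursC β C)
    (hg1 : ¬ occursW γ A₁) (hg2 : ¬ occursW γ A₂) (hgZ : ¬ occursW γ Z) (hgC : ¬ occursC γ C)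
    (hgb : γ ≠ β) {u v : CWord}
    (hu : u = A₁ ++ A₂ ++ [(β, true)] ++ Z ++ [(β, false)])
    (hv : v = A₂ ++ A₁ ++ [(γ, false)] ++ Z ++ [(γ, true)]) :
    CellEquiv (u ::ₘ C) (v ::ₘ C) := by
  subst hu; subst hv
  exact reconn A₁ A₂ Z β γ C hb1 hb2 hbZ hbC hg1 hg2 hgZ hgC hgb

lemma exists_fresh (S : Finset ℕ) (Xw Yw : CWord) (C : PreCell) :
    ∃ n : ℕ, n ∉ S ∧ ¬ occursW n Xw ∧ ¬ occursW n Yw ∧ ¬ occursC n C := by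
  obtain ⟨n, hn⟩ := Infinite.exists_notMem_finset
    (S ∪ (Xw.map Prod.fst).toFinset ∪ (Yw.map Prod.fst).toFinset ∪
      (C.bind fun w => ((w.map Prod.fst : List ℕ) : Multiset ℕ)).toFinset)
  simp only [Finset.mem_union, not_or, Multiset.mem_toFinset, Multiset.mem_bind,
    List.mem_toFinset, not_exists] at hn
  obtain ⟨⟨⟨h1, h2⟩, h3⟩, h4⟩ := hn
  refine ⟨n, h1, ?_, ?_, ?_⟩
  · rintro ⟨b, hb⟩; exact h2 (List.mem_map.2 ⟨(n, b), hb, rfl⟩)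
  · rintro ⟨b, hb⟩; exact h3 (List.mem_map.2 ⟨(n, b), hb, rfl⟩)
  · rintro ⟨w, hw, b, hb⟩
    have hm : n ∈ ((w.map Prod.fst : List ℕ) : Multiset ℕ) := by
      rw [Multiset.mem_coe]; exact List.mem_map.2 ⟨(n, b), hb, rfl⟩
    exact h4 w ⟨hw, hm⟩

/-- A face with boundary word `(a b a⁻¹ b⁻¹ X Y)` is equivalent to a face
with boundary word `(e f e⁻¹ f⁻¹ Y X)` for fresh edges `e`, `f`: a handle on a face may be
moved past any splitting of the remaining boundary, swapping `X` and `Y`. -/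
theorem move_handle_swap (Xw Yw : CWord) (a b e f : ℕ) (C : PreCell)
    (hval : IsCellComplex
      (([(a, true), (b, true), (a, false), (b, false)] ++ Xw ++ Yw) ::ₘ C))
    (hab : a ≠ b)
    (haX : ¬ occursW a Xw) (haY : ¬ occursW a Yw) (haC : ¬ occursC a C)
    (hbX : ¬ occursW b Xw) (hbY : ¬ occursW b Yw) (hbC : ¬ occursC b C)
    (hef : e ≠ f)
    (heX : ¬ occursW e Xw) (heY : ¬ occursW e Yw) (heC : ¬ occursC e C)
    (hfX : ¬ occursW f Xw) (hfY : ¬ occursW f Yw) (hfC : ¬ occursC f C) :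
    CellEquiv
      (([(a, true), (b, true), (a, false), (b, false)] ++ Xw ++ Yw) ::ₘ C)
      (([(e, true), (f, true), (e, false), (f, false)] ++ Yw ++ Xw) ::ₘ C) := by
  obtain ⟨c, hcS, hcX, hcY, hcC⟩ := exists_fresh {a, b, e, f} Xw Yw C
  obtain ⟨d, hdS, hdX, hdY, hdC⟩ := exists_fresh {a, b, e, f, c} Xw Yw C
  obtain ⟨g, hgS, hgX, hgY, hgC⟩ := exists_fresh {a, b, e, f, c, d} Xw Yw C
  simp only [Finset.mem_insert, Finset.mem_singleton, not_or] at hcS hdS hgS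
  obtain ⟨hca, hcb, hce, hcf⟩ := hcS
  obtain ⟨hda, hdb, hde, hdf, hdc⟩ := hdS
  obtain ⟨hga, hgb, hge, hgf, hgc, hgd⟩ := hgS
  calc
    (([(a, true), (b, true), (a, false), (b, false)] ++ Xw ++ Yw) ::ₘ C)
      ~c ((((b, false) :: Xw) ++ Yw ++ [(a, true), (b, true), (a, false)]) ::ₘ C) := by
        apply rot' [(a, true), (b, true), (a, false)] (((b, false) :: Xw) ++ Yw) C <;> simp
    _ ~c ((Yw ++ ((b, false) :: Xw) ++ [(c, false), (b, true), (c, true)]) ::ₘ C) := by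
        refine reconn' ((b, false) :: Xw) Yw [(b, true)] a c C ?_ haY ?_ haC ?_ hcY ?_ hcC hca ?_ ?_
        · simp [haX, Ne.symm hab]
        · simp [Ne.symm hab]
        · simp [hcX, Ne.symm hcb]
        · simp [Ne.symm hcb]
        · simp
        · simp
    _ ~c ((Xw ++ [(c, false), (b, true)] ++ ((c, true) :: Yw) ++ [(b, false)]) ::ₘ C) := by
        apply rot' (Yw ++ [(b, false)]) (Xw ++ [(c, false), (b, true), (c, true)]) C <;> simp
    _ ~c (([(c, false)] ++ Xw ++ [(d, false)] ++ ((c, true) :: Yw) ++ [(d, true)]) ::ₘ C) := by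
        refine reconn' Xw [(c, false)] ((c, true) :: Yw) b d C hbX ?_ ?_ hbC hdX ?_ ?_ hdC hdb ?_ ?_
        · simp [hcb]
        · simp [hcb, hbY]
        · simp [Ne.symm hdc]
        · simp [Ne.symm hdc, hdY]
        · simp
        · simp
    _ ~c ((Xw ++ [(d, false), (c, true)] ++ Yw ++ [(d, true), (c, false)]) ::ₘ C) := by
        apply rot' [(c, false)] (Xw ++ [(d, false)] ++ ((c, true) :: Yw) ++ [(d, true)]) C <;> simp
    _ ~c (([(d, false)] ++ Xw ++ [(f, false)] ++ Yw ++ [(d, true), (f, true)]) ::ₘ C) := by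
        refine reconn' Xw [(d, false)] (Yw ++ [(d, true)]) c f C hcX ?_ ?_ hcC hfX ?_ ?_ hfC (Ne.symm hcf) ?_ ?_
        · simp [hdc]
        · simp [hcY, hdc]
        · simp [hdf]
        · simp [hfY, hdf]
        · simp
        · simp
    _ ~c ((Xw ++ [(f, false)] ++ Yw ++ [(d, true), (f, true), (d, false)]) ::ₘ C) := by
        apply rot' [(d, false)] (Xw ++ [(f, false)] ++ Yw ++ [(d, true), (f, true)]) C <;> simp
    _ ~c ((((f, false) :: Yw) ++ Xw ++ [(g, false), (f, true), (g, true)]) ::ₘ C) := by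
        refine reconn' Xw ((f, false) :: Yw) [(f, true)] d g C hdX ?_ ?_ hdC hgX ?_ ?_ hgC hgd ?_ ?_
        · simp [Ne.symm hdf, hdY]
        · simp [Ne.symm hdf]
        · simp [Ne.symm hgf, hgY]
        · simp [Ne.symm hgf]
        · simp
        · simp
    _ ~c (([(f, true), (g, true)] ++ ((f, false) :: Yw) ++ Xw ++ [(g, false)]) ::ₘ C) := by
        apply rot' (((f, false) :: Yw) ++ Xw ++ [(g, false)]) [(f, true), (g, true)] C <;> simp
    _ ~c (([(f, true), (e, false), (f, false)] ++ Yw ++ Xw ++ [(e, true)]) ::ₘ C) := by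
        refine reconn' [] [(f, true)] ((f, false) :: (Yw ++ Xw)) g e C ?_ ?_ ?_ hgC ?_ ?_ ?_ heC (Ne.symm hge) ?_ ?_
        · simp
        · simp [Ne.symm hgf]
        · simp [Ne.symm hgf, hgX, hgY]
        · simp
        · simp [Ne.symm hef]
        · simp [Ne.symm hef, heX, heY]
        · simp
        · simp
    _ ~c (([(e, true), (f, true), (e, false), (f, false)] ++ Yw ++ Xw) ::ₘ C) := by
        apply rot' ([(f, true), (e, false), (f, false)] ++ Yw ++ Xw) [(e, true)] C <;> simp
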